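/- Let (F,v) and (G,w) be c-Bessel mappings for H with Bessel bounds B_{F,v} and B_{G,w} and synthesis operators T_{F,v}, T_{G,w}. If there is a bounded operator Q: L²(X,F) → L²(X,G) with T_{G,w} Q T*_{F,v} = I_H, then (F,v) is a c-fusion frame with lower bound B_{G,w}^{-1}‖Q‖^{-2} and (G,w) is a c-fusion frame with lower bound B_{F,v}^{-1}‖Q‖^{-2}. -/

import Mathlib

open MeasureTheory
open scoped ENNReal InnerProductSpace

noncomputable section

variable {H : Type} [NormedAddCommGroup H] [InnerProductSpace ℂ H] [CompleteSpace H]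
variable {X : Type} [MeasurableSpace X]

open scoped Classical in
def projFn (W : Submodule ℂ H) (h : H) : H :=
  if hW : IsClosed (W : Set H) then
    haveI : CompleteSpace W := hW.completeSpace_coe
    (W.orthogonalProjectionOnto h : H)
  else 0

structure IsCBessel (μ : Measure X) (F : X → Submodule ℂ H) (v : X → ℝ) (B : ℝ) : Prop where
  closed : ∀ x, IsClosed ((F x) : Set H)
  meas : ∀ h : H, AEStronglyMeasurable (fun x => projFn (F x) h) μ
  bessel : ∀ h : H,
    ∫⁻ x, ENNReal.ofReal ((v x) ^ 2 * ‖projFn (F x) h‖ ^ 2) ∂μ ≤ ENNReal.ofReal (B * ‖h‖ ^ 2)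

structure IsCFusionFrame (μ : Measure X) (F : X → Submodule ℂ H) (v : X → ℝ)
    (A B : ℝ) extends IsCBessel μ F v B : Prop where
  posA : 0 < A
  lower : ∀ h : H,
    ENNReal.ofReal (A * ‖h‖ ^ 2) ≤ ∫⁻ x, ENNReal.ofReal ((v x) ^ 2 * ‖projFn (F x) h‖ ^ 2) ∂μ

def L2F (μ : Measure X) (F : X → Submodule ℂ H) : Submodule ℂ (Lp H 2 μ) where
  carrier := {f | ∀ᵐ x ∂μ, f x ∈ F x}
  add_mem' := by
    intro f g hf hg
    filter_upwards [hf, hg, Lp.coeFn_add f g] with x h1 h2 h3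
    rw [h3]
    exact add_mem h1 h2
  zero_mem' := by
    filter_upwards [Lp.coeFn_zero H 2 μ] with x h1
    rw [h1]; exact zero_mem _
  smul_mem' := by
    intro c f hf
    filter_upwards [hf, Lp.coeFn_smul c f] with x h1 h2
    rw [h2]
    exact Submodule.smul_mem _ _ h1

def IsSynthesis (μ : Measure X) (F : X → Submodule ℂ H) (v : X → ℝ)
    (T : L2F μ F →L[ℂ] H) : Prop :=
  ∀ (f : L2F μ F) (h : H),
    (⟪T f, h⟫_ℂ : ℂ) = ∫ x, (v x : ℂ) * (⟪(↑f : Lp H 2 μ) x, h⟫_ℂ : ℂ) ∂μ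

/-!
Cauchy-Schwarz gives `‖⟪T_{F,v} f, h⟫‖² ≤ ‖f‖² ∫ v² ‖π_{F(x)} h‖²`, and applied to `f = T*_{F,v} h`
it gives `‖T*_{F,v} h‖² ≤ ∫ v² ‖π_{F(x)} h‖²`. Since `h = T_{G,w} Q T*_{F,v} h`,
`‖h‖⁴ = ‖⟪T_{G,w} (Q T*_{F,v} h), h⟫‖² ≤ ‖Q‖² (∫ v² ‖π_{F(x)} h‖²) (∫ w² ‖π_{G(x)} h‖²)`,
and bounding either factor by its Bessel bound `B ‖h‖²` leaves the lower frame bound for the other.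
-/

def fusionIntegral (μ : Measure X) (F : X → Submodule ℂ H) (v : X → ℝ) (h : H) : ℝ≥0∞ :=
  ∫⁻ x, ENNReal.ofReal ((v x) ^ 2 * ‖projFn (F x) h‖ ^ 2) ∂μ

theorem inner_projFn_right_of_mem {W : Submodule ℂ H} (hW : IsClosed (W : Set H)) {u : H}
    (hu : u ∈ W) (h : H) : ⟪u, projFn W h⟫_ℂ = ⟪u, h⟫_ℂ := by
  have : CompleteSpace W := hW.completeSpace_coe
  rw [projFn, dif_pos hW]
  exact Submodule.inner_orthogonalProjectionOnto_eq_of_mem_left ⟨u, hu⟩ h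

theorem two_mul_norm_mul_inner_le {W : Submodule ℂ H} (hW : IsClosed (W : Set H)) {u : H}
    (hu : u ∈ W) (h : H) (r : ℝ) {t : ℝ} (ht : 0 ≤ t) :
    2 * t * ‖(r : ℂ) * ⟪u, h⟫_ℂ‖ ≤ t ^ 2 * ‖u‖ ^ 2 + r ^ 2 * ‖projFn W h‖ ^ 2 := by
  rw [← inner_projFn_right_of_mem hW hu, norm_mul, Complex.norm_real, Real.norm_eq_abs]
  have hcs := norm_inner_le_norm (𝕜 := ℂ) u (projFn W h)
  nlinarith [sq_nonneg (t * ‖u‖ - |r| * ‖projFn W h‖), sq_abs r,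
    mul_le_mul_of_nonneg_left hcs (by positivity : 0 ≤ 2 * t * |r|)]

theorem lintegral_ofReal_norm_sq {α E : Type*} [MeasurableSpace α] [NormedAddCommGroup E]
    {μ : Measure α} (f : Lp E 2 μ) :
    ∫⁻ x, ENNReal.ofReal (‖f x‖ ^ 2) ∂μ = ENNReal.ofReal (‖f‖ ^ 2) := by
  have hpow : ∀ x, ENNReal.ofReal (‖f x‖ ^ 2) = ‖f x‖ₑ ^ (2 : ℝ) := fun x => by
    rw [ENNReal.ofReal_pow (norm_nonneg _), ofReal_norm, ← ENNReal.rpow_natCast]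
    norm_num
  simp_rw [hpow]
  rw [Lp.norm_def, ENNReal.ofReal_pow ENNReal.toReal_nonneg,
    ENNReal.ofReal_toReal (Lp.eLpNorm_ne_top f), eLpNorm_eq_lintegral_rpow_enorm_toReal (by norm_num) (by norm_num), ← ENNReal.rpow_natCast,
    ← ENNReal.rpow_mul]
  norm_num

theorem sq_le_mul_of_forall_two_mul_le {a s c : ℝ} (ha : 0 ≤ a) (hs : 0 ≤ s) (hc : 0 ≤ c)
    (h : ∀ t, 0 ≤ t → 2 * t * c ≤ t ^ 2 * a + s) : c ^ 2 ≤ a * s := by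
  have := discrim_le_zero (a := a) (b := -2 * c) (c := s) fun t => by
    rcases le_total 0 t with ht | ht
    · nlinarith [h t ht]
    · nlinarith [mul_nonneg (neg_nonneg.2 ht) hc, mul_self_nonneg t]
  rw [discrim] at this
  nlinarith

theorem ofReal_inv_mul_inv_mul_le_of_sq_le {n q B : ℝ} {S S' : ℝ≥0∞} (hn : 0 ≤ n) (hS : S ≠ ⊤)
    (hS' : S' ≤ ENNReal.ofReal (B * n)) (h : n ^ 2 ≤ q ^ 2 * S.toReal * S'.toReal) :
    ENNReal.ofReal (B⁻¹ * (q ^ 2)⁻¹ * n) ≤ S := by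
  rcases le_or_gt B 0 with hB | hB
  · rw [ENNReal.ofReal_of_nonpos (mul_nonpos_of_nonpos_of_nonneg
      (mul_nonpos_of_nonpos_of_nonneg (inv_nonpos.2 hB) (by positivity)) hn)]
    exact zero_le
  rw [ENNReal.ofReal_le_iff_le_toReal hS]
  have hS'B : S'.toReal ≤ B * n := by
    simpa [ENNReal.toReal_ofReal (by positivity : 0 ≤ B * n)] using
      ENNReal.toReal_mono ENNReal.ofReal_ne_top hS'
  rcases eq_or_lt_of_le (sq_nonneg q) with hq | hq
  · simp [← hq]
  rw [← mul_inv, inv_mul_le_iff₀ (by positivity)]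
  rcases eq_or_lt_of_le hn with rfl | hn
  · positivity
  have : n * n ≤ n * (B * q ^ 2 * S.toReal) := by
    nlinarith [mul_le_mul_of_nonneg_left hS'B (by positivity : 0 ≤ q ^ 2 * S.toReal)]
  nlinarith

namespace IsCBessel

variable {μ : Measure X} {F : X → Submodule ℂ H} {v : X → ℝ} {B : ℝ}

theorem fusionIntegral_ne_top (hF : IsCBessel μ F v B) (h : H) : fusionIntegral μ F v h ≠ ⊤ :=
  ne_top_of_le_ne_top ENNReal.ofReal_ne_top (hF.bessel h)

/-- The AM-GM form of Cauchy-Schwarz: no measurability of `v` is assumed, so Hölder's inequality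
is not available, but integrating a pointwise AM-GM bound only needs one measurable summand. -/
theorem two_mul_norm_inner_synthesis_le (hF : IsCBessel μ F v B) {T : L2F μ F →L[ℂ] H}
    (hT : IsSynthesis μ F v T) (f : L2F μ F) (h : H) {t : ℝ} (ht : 0 ≤ t) :
    2 * t * ‖⟪T f, h⟫_ℂ‖ ≤ t ^ 2 * ‖f‖ ^ 2 + (fusionIntegral μ F v h).toReal := by
  set g : X → ℂ := fun x => (v x : ℂ) * ⟪(f : Lp H 2 μ) x, h⟫_ℂ
  have hmeas : AEMeasurable (fun x => ENNReal.ofReal (t ^ 2 * ‖(f : Lp H 2 μ) x‖ ^ 2)) μ :=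
    (((Lp.aestronglyMeasurable _).norm.aemeasurable.pow_const 2).const_mul _).ennreal_ofReal
  have hlint : ENNReal.ofReal (2 * t) * ∫⁻ x, ENNReal.ofReal ‖g x‖ ∂μ ≤
      ENNReal.ofReal (t ^ 2 * ‖f‖ ^ 2) + fusionIntegral μ F v h := by
    rw [← lintegral_const_mul' _ _ ENNReal.ofReal_ne_top]
    calc ∫⁻ x, ENNReal.ofReal (2 * t) * ENNReal.ofReal ‖g x‖ ∂μ
        ≤ ∫⁻ x, ENNReal.ofReal (t ^ 2 * ‖(f : Lp H 2 μ) x‖ ^ 2) +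
            ENNReal.ofReal ((v x) ^ 2 * ‖projFn (F x) h‖ ^ 2) ∂μ := by
          refine lintegral_mono_ae ?_
          filter_upwards [f.2] with x hx
          rw [← ENNReal.ofReal_mul (by positivity), ← ENNReal.ofReal_add (by positivity)
            (by positivity)]
          exact ENNReal.ofReal_le_ofReal (two_mul_norm_mul_inner_le (hF.closed x) hx h (v x) ht)
      _ = ENNReal.ofReal (t ^ 2 * ‖f‖ ^ 2) + fusionIntegral μ F v h := by
          simp_rw [lintegral_add_left' hmeas, ENNReal.ofReal_mul (sq_nonneg t)]
          rw [lintegral_const_mul' _ _ ENNReal.ofReal_ne_top, lintegral_ofReal_norm_sq]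
          rfl
  calc 2 * t * ‖⟪T f, h⟫_ℂ‖ ≤ 2 * t * (∫⁻ x, ENNReal.ofReal ‖g x‖ ∂μ).toReal := by
        rw [hT f h]
        gcongr
        exact norm_integral_le_lintegral_norm g
    _ = (ENNReal.ofReal (2 * t) * ∫⁻ x, ENNReal.ofReal ‖g x‖ ∂μ).toReal := by
        rw [ENNReal.toReal_mul, ENNReal.toReal_ofReal (by positivity)]
    _ ≤ (ENNReal.ofReal (t ^ 2 * ‖f‖ ^ 2) + fusionIntegral μ F v h).toReal :=
        ENNReal.toReal_mono (by finiteness [hF.fusionIntegral_ne_top h]) hlint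
    _ = t ^ 2 * ‖f‖ ^ 2 + (fusionIntegral μ F v h).toReal := by
        rw [ENNReal.toReal_add ENNReal.ofReal_ne_top (hF.fusionIntegral_ne_top h),
          ENNReal.toReal_ofReal (by positivity)]

theorem sq_norm_inner_synthesis_le (hF : IsCBessel μ F v B) {T : L2F μ F →L[ℂ] H}
    (hT : IsSynthesis μ F v T) (f : L2F μ F) (h : H) :
    ‖⟪T f, h⟫_ℂ‖ ^ 2 ≤ ‖f‖ ^ 2 * (fusionIntegral μ F v h).toReal :=
  sq_le_mul_of_forall_two_mul_le (by positivity) ENNReal.toReal_nonneg (norm_nonneg _)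
    fun _ ht => hF.two_mul_norm_inner_synthesis_le hT f h ht

theorem sq_norm_adjoint_synthesis_le [CompleteSpace (L2F μ F)] (hF : IsCBessel μ F v B)
    {T : L2F μ F →L[ℂ] H} (hT : IsSynthesis μ F v T) (h : H) :
    ‖T.adjoint h‖ ^ 2 ≤ (fusionIntegral μ F v h).toReal := by
  have := hF.sq_norm_inner_synthesis_le hT (T.adjoint h) h
  rw [← ContinuousLinearMap.adjoint_inner_right, inner_self_eq_norm_sq_to_K] at this
  norm_cast at this
  rw [sq_abs] at this
  nlinarith [sq_nonneg ‖T.adjoint h‖, ENNReal.toReal_nonneg (a := fusionIntegral μ F v h)]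

end IsCBessel

theorem sq_sq_norm_le_of_synthesis_comp_eq_id {μ : Measure X} {F G : X → Submodule ℂ H}
    {v w : X → ℝ} {BF BG : ℝ} (hF : IsCBessel μ F v BF) (hG : IsCBessel μ G w BG)
    [CompleteSpace (L2F μ F)] {TF : L2F μ F →L[ℂ] H} (hTF : IsSynthesis μ F v TF)
    {TG : L2F μ G →L[ℂ] H} (hTG : IsSynthesis μ G w TG) (Q : L2F μ F →L[ℂ] L2F μ G) {h : H}
    (hQ : TG (Q (TF.adjoint h)) = h) :
    (‖h‖ ^ 2) ^ 2 ≤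
      ‖Q‖ ^ 2 * (fusionIntegral μ F v h).toReal * (fusionIntegral μ G w h).toReal := by
  calc (‖h‖ ^ 2) ^ 2 = ‖⟪TG (Q (TF.adjoint h)), h⟫_ℂ‖ ^ 2 := by
        rw [hQ, inner_self_eq_norm_sq_to_K]
        norm_cast
        rw [sq_abs]
    _ ≤ ‖Q (TF.adjoint h)‖ ^ 2 * (fusionIntegral μ G w h).toReal :=
        hG.sq_norm_inner_synthesis_le hTG _ h
    _ ≤ (‖Q‖ * ‖TF.adjoint h‖) ^ 2 * (fusionIntegral μ G w h).toReal := by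
        gcongr
        exact Q.le_opNorm _
    _ ≤ ‖Q‖ ^ 2 * (fusionIntegral μ F v h).toReal * (fusionIntegral μ G w h).toReal := by
        rw [mul_pow]
        gcongr
        exact hF.sq_norm_adjoint_synthesis_le hTF h

/-- If `(F, v)` and `(G, w)` are c-Bessel with bounds `B_F, B_G` and there
is a bounded `Q` with `T_{G,w} Q T*_{F,v} = I_H`, then `(F, v)` is a c-fusion frame with
lower bound `B_G⁻¹ ‖Q‖⁻²` and `(G, w)` is one with lower bound `B_F⁻¹ ‖Q‖⁻²`. -/
theorem statement5 {μ : Measure X} {F G : X → Submodule ℂ H} {v w : X → ℝ} {BF BG : ℝ}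
    (hF : IsCBessel μ F v BF) (hG : IsCBessel μ G w BG) [CompleteSpace ↥(L2F μ F)]
    (TF : L2F μ F →L[ℂ] H) (hTF : IsSynthesis μ F v TF)
    (TG : L2F μ G →L[ℂ] H) (hTG : IsSynthesis μ G w TG)
    (Q : (L2F μ F : Type) →L[ℂ] (L2F μ G : Type))
    (hQ : TG.comp (Q.comp (ContinuousLinearMap.adjoint TF)) = ContinuousLinearMap.id ℂ H) :
    (∀ h : H, ENNReal.ofReal ((BG⁻¹ * (‖Q‖ ^ 2)⁻¹) * ‖h‖ ^ 2) ≤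
        ∫⁻ x, ENNReal.ofReal ((v x) ^ 2 * ‖projFn (F x) h‖ ^ 2) ∂μ) ∧
    (∀ h : H, ENNReal.ofReal ((BF⁻¹ * (‖Q‖ ^ 2)⁻¹) * ‖h‖ ^ 2) ≤
        ∫⁻ x, ENNReal.ofReal ((w x) ^ 2 * ‖projFn (G x) h‖ ^ 2) ∂μ) := by
  have hprod (h : H) := sq_sq_norm_le_of_synthesis_comp_eq_id hF hG hTF hTG Q
    (ContinuousLinearMap.ext_iff.1 hQ h)
  refine ⟨fun h => ?_, fun h => ?_⟩
  · exact ofReal_inv_mul_inv_mul_le_of_sq_le (by positivity) (hF.fusionIntegral_ne_top h)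
      (hG.bessel h) (hprod h)
  · exact ofReal_inv_mul_inv_mul_le_of_sq_le (by positivity) (hG.fusionIntegral_ne_top h)
      (hF.bessel h) ((hprod h).trans_eq (mul_right_comm _ _ _))
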